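/- Suppose every vertex v of T has exactly s_{|v|+1} children, where (s_n) is a bounded sequence of positive integers. Then B is bounded on H^p(T) with ‖B‖ = sup_n s_n, the set {λ ∈ ℂ : (λ^n/(s_1 s_2 ··· s_n))_n is bounded} is contained in the point spectrum of B on H^p(T), and the spectral radius of B equals lim_{m→∞} (sup_{n≥0} s_{n+1}s_{n+2}···s_{n+m})^{1/m}. In particular, if liminf_n (s_1···s_n)^{1/n} = sup_n s_n =: t, then σ(B) is the closed disk of radius t. -/

import Mathlib

open scoped BigOperators
open Classical

/-- An infinite, locally finite rooted tree, presented combinatorially via a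
parent function and a level (distance-to-root) function.  Every level is a
finite nonempty set of vertices. -/
structure HTree where
  V : Type
  root : V
  parent : V → V
  level : V → ℕ
  level_root : level root = 0
  root_of_level_zero : ∀ v, level v = 0 → v = root
  level_parent : ∀ v, v ≠ root → level (parent v) + 1 = level v
  finite_level : ∀ n : ℕ, {v : V | level v = n}.Finite
  nonempty_level : ∀ n : ℕ, {v : V | level v = n}.Nonempty

namespace HTree

variable (T : HTree)

/-- The finite set of vertices at level `n`. -/
noncomputable def levelFinset (n : ℕ) : Finset T.V := (T.finite_level n).toFinset

/-- `γ(n)`, the number of vertices at level `n`. -/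
noncomputable def gamma (n : ℕ) : ℕ := (T.levelFinset n).card

/-- The set of `m`-children of a vertex `v`. -/
noncomputable def nChildrenFinset (m : ℕ) (v : T.V) : Finset T.V :=
  (T.levelFinset (T.level v + m)).filter (fun w => T.parent^[m] w = v)

/-- `γ(m,v)`, the number of `m`-children of `v`. -/
noncomputable def numNChildren (m : ℕ) (v : T.V) : ℕ := (T.nChildrenFinset m v).card

/-- The set of children of a vertex. -/
noncomputable def childrenFinset (v : T.V) : Finset T.V := T.nChildrenFinset 1 v

/-- `γ(1,v)`, the number of children of `v`. -/
noncomputable def numChildren (v : T.V) : ℕ := T.numNChildren 1 v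

/-- `K(m,r)`, the maximal number of `m`-children among vertices at level `r`. -/
noncomputable def K (m r : ℕ) : ℕ := (T.levelFinset r).sup (fun v => T.numNChildren m v)

/-- `M_p^p(n,f)`, the `p`-th power of the `p`-th mean of `|f|` over level `n`. -/
noncomputable def Mpp (p : ℝ) (f : T.V → ℂ) (n : ℕ) : ℝ :=
  (1 / (T.gamma n : ℝ)) * ∑ v ∈ T.levelFinset n, ‖f v‖ ^ p

/-- `M_p(n,f)`, the `p`-th mean of `|f|` over level `n`. -/
noncomputable def Mp (p : ℝ) (f : T.V → ℂ) (n : ℕ) : ℝ := (T.Mpp p f n) ^ (1 / p)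

/-- Membership in the Hardy space `H^p(T)`. -/
def MemHp (p : ℝ) (f : T.V → ℂ) : Prop := ∃ C : ℝ, ∀ n : ℕ, T.Mp p f n ≤ C

/-- Membership in the little Hardy space `H^p_0(T)`. -/
def MemHp0 (p : ℝ) (f : T.V → ℂ) : Prop :=
  Filter.Tendsto (T.Mp p f) Filter.atTop (nhds 0)

/-- The `H^p` norm, `sup_n M_p(n,f)`. -/
noncomputable def Hnorm (p : ℝ) (f : T.V → ℂ) : ℝ := ⨆ n : ℕ, T.Mp p f n

/-- The forward shift `(Sf)(v) = f(parent v)`, `(Sf)(root) = 0`. -/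
noncomputable def S (f : T.V → ℂ) : T.V → ℂ := fun v => if v = T.root then 0 else f (T.parent v)

/-- The backward shift `(Bf)(v) = Σ_{w child of v} f(w)`. -/
noncomputable def B (f : T.V → ℂ) : T.V → ℂ := fun v => ∑ w ∈ T.childrenFinset v, f w

/-- An operator `A` is bounded on the subspace described by `Mem`, with the
`H^p` norm. -/
def BoundedOn (A : (T.V → ℂ) → (T.V → ℂ)) (Mem : (T.V → ℂ) → Prop) (p : ℝ) : Prop :=
  ∃ C : ℝ, 0 ≤ C ∧ ∀ f, Mem f → Mem (A f) ∧ T.Hnorm p (A f) ≤ C * T.Hnorm p f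

/-- The operator norm of `A` on the subspace described by `Mem`. -/
noncomputable def opNorm (A : (T.V → ℂ) → (T.V → ℂ)) (Mem : (T.V → ℂ) → Prop) (p : ℝ) : ℝ :=
  sInf {C : ℝ | 0 ≤ C ∧ ∀ f, Mem f → Mem (A f) ∧ T.Hnorm p (A f) ≤ C * T.Hnorm p f}

/-- Hypercyclicity of an operator `A` on the subspace described by `Mem`. -/
def Hypercyclic (A : (T.V → ℂ) → (T.V → ℂ)) (Mem : (T.V → ℂ) → Prop) (p : ℝ) : Prop :=
  ∃ f, Mem f ∧ ∀ g, Mem g → ∀ ε : ℝ, 0 < ε →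
    ∃ N : ℕ, T.Hnorm p (fun v => A^[N] f v - g v) < ε

end HTree

/-! In a level-regular tree every vertex of level `n` has exactly
`κ(m,n) = s_{n+1} ⋯ s_{n+m}` `m`-children and `γ(n+m) = γ(n) κ(m,n)`, so the power-mean
inequality gives `M_p(n, B^m f) ≤ κ(m,n) M_p(n+m, f)`, with equality for `f = 1`; hence
`‖B^m‖ = sup_n κ(m,n)`. Radial functions `f(v) = φ(|v|)` satisfy
`(Bf)(v) = s_{|v|+1} φ(|v|+1)`, so `φ(n) = λ^n / γ(n)` is an eigenvector, lying in `H^p`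
exactly when `λ^n / γ(n)` is bounded. If the `liminf` of `γ(n)^{1/n}` equals `t = sup_n s_n`,
then `γ(m) ≤ ‖B^m‖ ≤ t^m` squeezes `‖B^m‖^{1/m}` to `t`, and `|λ| < t` forces
`|λ|^n / γ(n) → 0`. -/

open Filter Topology Finset

lemma prod_range_shift_le_pow {s : ℕ → ℕ} {t : ℝ} (h : ∀ n, (s (n + 1) : ℝ) ≤ t) (m n : ℕ) :
    ∏ k ∈ range m, (s (n + k + 1) : ℝ) ≤ t ^ m :=
  (prod_le_prod (fun _ _ => by positivity) fun k _ => h (n + k)).trans_eq (by simp)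

lemma bddAbove_range_prod_shift {s : ℕ → ℕ} (hs : BddAbove (Set.range s)) (m : ℕ) :
    BddAbove (Set.range fun n => ∏ k ∈ range m, (s (n + k + 1) : ℝ)) := by
  obtain ⟨M, hM⟩ := hs
  exact ⟨(M : ℝ) ^ m, Set.forall_mem_range.2 <|
    prod_range_shift_le_pow (fun n => by exact_mod_cast hM (Set.mem_range_self _)) m⟩

lemma tendsto_rpow_one_div_of_liminf_eq {P W : ℕ → ℝ} {t : ℝ} (hP : ∀ m, 0 ≤ P m)
    (hPW : ∀ m, P m ≤ W m) (hWt : ∀ m, W m ≤ t ^ m)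
    (hlim : liminf (fun m : ℕ => P m ^ ((1 : ℝ) / m)) atTop = t) :
    Tendsto (fun m : ℕ => W m ^ ((1 : ℝ) / m)) atTop (𝓝 t) := by
  have ht : 0 ≤ t := by simpa using (hP 1).trans ((hPW 1).trans (hWt 1))
  have hW : ∀ m, 0 ≤ W m := fun m => (hP m).trans (hPW m)
  have hle : ∀ m : ℕ, P m ^ ((1 : ℝ) / m) ≤ W m ^ ((1 : ℝ) / m) := fun m =>
    Real.rpow_le_rpow (hP m) (hPW m) (by positivity)
  have hlet : ∀ᶠ m : ℕ in atTop, W m ^ ((1 : ℝ) / m) ≤ t := by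
    filter_upwards [eventually_ne_atTop 0] with m hm
    calc W m ^ ((1 : ℝ) / m) ≤ (t ^ m) ^ ((1 : ℝ) / m) :=
          Real.rpow_le_rpow (hW m) (hWt m) (by positivity)
      _ = t := by rw [one_div, Real.pow_rpow_inv_natCast ht hm]
  have hbdd_above : IsBoundedUnder (· ≤ ·) atTop fun m : ℕ => W m ^ ((1 : ℝ) / m) :=
    isBoundedUnder_of_eventually_le hlet
  have hbdd_below : IsBoundedUnder (· ≥ ·) atTop fun m : ℕ => W m ^ ((1 : ℝ) / m) :=
    isBoundedUnder_of_eventually_ge (.of_forall fun m => Real.rpow_nonneg (hW m) _)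
  refine tendsto_of_le_liminf_of_limsup_le ?_
    (limsup_le_of_le hbdd_below.isCoboundedUnder_le hlet) hbdd_above hbdd_below
  exact hlim ▸ liminf_le_liminf (.of_forall hle)
    (isBoundedUnder_of_eventually_ge (.of_forall fun m => Real.rpow_nonneg (hP m) _))
    hbdd_above.isCoboundedUnder_ge

lemma bddAbove_range_pow_div_of_lt_liminf {P : ℕ → ℝ} (hP : ∀ n, 0 < P n) {x : ℝ}
    (hx : 0 ≤ x)
    (hlt : x < liminf (fun n : ℕ => P n ^ ((1 : ℝ) / n)) atTop) :
    BddAbove (Set.range fun n => x ^ n / P n) := by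
  obtain ⟨a, hxa, ha⟩ := exists_between hlt
  have hev : ∀ᶠ n : ℕ in atTop, a < P n ^ ((1 : ℝ) / n) := eventually_lt_of_lt_liminf ha
    (isBoundedUnder_of_eventually_ge (.of_forall fun n => Real.rpow_nonneg (hP n).le _))
  refine IsBoundedUnder.bddAbove_range (isBoundedUnder_of_eventually_le (a := 1) ?_)
  filter_upwards [hev, eventually_ne_atTop 0] with n hn hn0
  rw [div_le_one (hP n)]
  calc x ^ n ≤ a ^ n := pow_le_pow_left₀ hx hxa.le n
    _ ≤ (P n ^ ((1 : ℝ) / n)) ^ n := pow_le_pow_left₀ (hx.trans hxa.le) hn.le n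
    _ = P n := by rw [one_div, Real.rpow_inv_natCast_pow (hP n).le hn0]

namespace HTree

variable (T : HTree)

lemma mem_levelFinset {v : T.V} {n : ℕ} : v ∈ T.levelFinset n ↔ T.level v = n :=
  Set.Finite.mem_toFinset _

lemma levelFinset_zero : T.levelFinset 0 = {T.root} := by
  ext v
  rw [mem_levelFinset, mem_singleton]
  exact ⟨T.root_of_level_zero v, fun h => h ▸ T.level_root⟩

lemma gamma_pos (n : ℕ) : 0 < T.gamma n := by
  obtain ⟨v, hv⟩ := T.nonempty_level n
  exact card_pos.2 ⟨v, T.mem_levelFinset.2 hv⟩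

lemma gamma_zero : T.gamma 0 = 1 := by
  rw [gamma, levelFinset_zero, card_singleton]

lemma ne_root_of_level_pos {v : T.V} (h : 0 < T.level v) : v ≠ T.root := by
  rintro rfl
  exact (T.level_root ▸ h).false

lemma level_parent_iterate {m : ℕ} {v : T.V} (hm : m ≤ T.level v) :
    T.level (T.parent^[m] v) + m = T.level v := by
  induction m generalizing v with
  | zero => rfl
  | succ m ih =>
    have hv := T.level_parent v (T.ne_root_of_level_pos (by omega))
    have := ih (v := T.parent v) (by omega)
    rw [Function.iterate_succ_apply]
    omega

lemma mem_nChildrenFinset {m : ℕ} {v w : T.V} :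
    w ∈ T.nChildrenFinset m v ↔ T.level w = T.level v + m ∧ T.parent^[m] w = v := by
  rw [nChildrenFinset, mem_filter, mem_levelFinset]

lemma nChildrenFinset_zero (v : T.V) : T.nChildrenFinset 0 v = {v} := by
  ext w
  simp only [mem_nChildrenFinset, Function.iterate_zero_apply, mem_singleton, add_zero]
  exact ⟨And.right, fun h => ⟨h ▸ rfl, h⟩⟩

lemma disjoint_nChildrenFinset (m : ℕ) {v v' : T.V} (h : v ≠ v') :
    Disjoint (T.nChildrenFinset m v) (T.nChildrenFinset m v') :=
  disjoint_left.2 fun _ hw hw' =>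
    h ((T.mem_nChildrenFinset.1 hw).2 ▸ (T.mem_nChildrenFinset.1 hw').2)

lemma levelFinset_add (n m : ℕ) :
    T.levelFinset (n + m) = (T.levelFinset n).biUnion (T.nChildrenFinset m) := by
  ext w
  simp only [mem_biUnion, mem_levelFinset, mem_nChildrenFinset]
  constructor
  · intro hw
    have := T.level_parent_iterate (m := m) (v := w) (by omega)
    exact ⟨T.parent^[m] w, by omega, by omega, rfl⟩
  · rintro ⟨v, hv, hw, rfl⟩
    omega

lemma nChildrenFinset_succ (m : ℕ) (v : T.V) :
    T.nChildrenFinset (m + 1) v = (T.nChildrenFinset m v).biUnion T.childrenFinset := by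
  ext u
  simp only [mem_biUnion, childrenFinset, mem_nChildrenFinset]
  constructor
  · rintro ⟨hu, hpu⟩
    have := T.level_parent u (T.ne_root_of_level_pos (by omega))
    exact ⟨T.parent u, ⟨by omega, hpu⟩, by omega, rfl⟩
  · rintro ⟨w, ⟨hw, rfl⟩, hu, rfl⟩
    exact ⟨by omega, rfl⟩

lemma sum_levelFinset_add {M : Type*} [AddCommMonoid M] (n m : ℕ) (g : T.V → M) :
    ∑ v ∈ T.levelFinset n, ∑ w ∈ T.nChildrenFinset m v, g w =
      ∑ w ∈ T.levelFinset (n + m), g w := by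
  rw [levelFinset_add, sum_biUnion fun _ _ _ _ h => T.disjoint_nChildrenFinset m h]

lemma B_iterate_apply (m : ℕ) (f : T.V → ℂ) (v : T.V) :
    T.B^[m] f v = ∑ w ∈ T.nChildrenFinset m v, f w := by
  induction m generalizing f with
  | zero => simp [nChildrenFinset_zero]
  | succ m ih =>
    rw [Function.iterate_succ_apply, ih, nChildrenFinset_succ]
    exact (sum_biUnion fun _ _ _ _ h => T.disjoint_nChildrenFinset 1 h).symm

lemma B_iterate_one_apply (m : ℕ) (v : T.V) : T.B^[m] 1 v = T.numNChildren m v := by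
  simp [B_iterate_apply, numNChildren]

lemma B_radial_apply (φ : ℕ → ℂ) (v : T.V) :
    T.B (fun w => φ (T.level w)) v = T.numChildren v * φ (T.level v + 1) := by
  have hφ : ∀ w ∈ T.childrenFinset v, φ (T.level w) = φ (T.level v + 1) := fun w hw => by
    rw [(T.mem_nChildrenFinset.1 hw).1]
  rw [B, sum_congr rfl hφ, sum_const, nsmul_eq_mul, numChildren, numNChildren, childrenFinset]

section Hardy

variable {p : ℝ}

lemma Mpp_nonneg (f : T.V → ℂ) (n : ℕ) : 0 ≤ T.Mpp p f n := by
  unfold Mpp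
  positivity

lemma Mp_nonneg (f : T.V → ℂ) (n : ℕ) : 0 ≤ T.Mp p f n :=
  Real.rpow_nonneg (T.Mpp_nonneg f n) _

lemma Mp_eq_of_norm_eq (hp : p ≠ 0) {f : T.V → ℂ} {n : ℕ} {c : ℝ} (hc : 0 ≤ c)
    (h : ∀ v ∈ T.levelFinset n, ‖f v‖ = c) : T.Mp p f n = c := by
  have hγ : (T.gamma n : ℝ) ≠ 0 := by exact_mod_cast (T.gamma_pos n).ne'
  rw [Mp, Mpp, sum_congr rfl fun v hv => by rw [h v hv], sum_const, nsmul_eq_mul, ← gamma,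
    one_div, inv_mul_cancel_left₀ hγ, ← Real.rpow_mul hc, mul_one_div_cancel hp, Real.rpow_one]

lemma Mp_radial (hp : p ≠ 0) (φ : ℕ → ℂ) (n : ℕ) :
    T.Mp p (fun w => φ (T.level w)) n = ‖φ n‖ :=
  T.Mp_eq_of_norm_eq hp (norm_nonneg _) fun v hv => by rw [T.mem_levelFinset.1 hv]

lemma Mp_le_Hnorm {f : T.V → ℂ} (hf : T.MemHp p f) (n : ℕ) : T.Mp p f n ≤ T.Hnorm p f := by
  obtain ⟨C, hC⟩ := hf
  exact le_ciSup ⟨C, Set.forall_mem_range.2 hC⟩ n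

lemma Hnorm_eq_iSup {f : T.V → ℂ} {c : ℕ → ℝ} (h : ∀ n, T.Mp p f n = c n) :
    T.Hnorm p f = ⨆ n, c n := by
  simp only [Hnorm, h]

lemma norm_B_iterate_rpow_le (hp : 1 ≤ p) (m : ℕ) (f : T.V → ℂ) (v : T.V) :
    ‖T.B^[m] f v‖ ^ p ≤
      (T.numNChildren m v : ℝ) ^ (p - 1) * ∑ w ∈ T.nChildrenFinset m v, ‖f w‖ ^ p := by
  rw [B_iterate_apply]
  calc ‖∑ w ∈ T.nChildrenFinset m v, f w‖ ^ p
        ≤ (∑ w ∈ T.nChildrenFinset m v, ‖f w‖) ^ p :=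
        Real.rpow_le_rpow (norm_nonneg _) (norm_sum_le _ _) (by linarith)
    _ ≤ _ := Real.rpow_sum_le_const_mul_sum_rpow_of_nonneg _ hp fun _ _ => norm_nonneg _

lemma Mpp_B_iterate_le (hp : 1 ≤ p) (m n : ℕ) (f : T.V → ℂ) :
    T.Mpp p (T.B^[m] f) n ≤
      (T.K m n : ℝ) ^ (p - 1) * (T.gamma (n + m) / T.gamma n) * T.Mpp p f (n + m) := by
  have hK : ∀ v ∈ T.levelFinset n,
      (T.numNChildren m v : ℝ) ^ (p - 1) ≤ (T.K m n : ℝ) ^ (p - 1) := fun v hv =>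
    Real.rpow_le_rpow (by positivity) (by exact_mod_cast le_sup hv) (by linarith)
  have hsum : ∑ v ∈ T.levelFinset n, ‖T.B^[m] f v‖ ^ p ≤
      (T.K m n : ℝ) ^ (p - 1) * ∑ w ∈ T.levelFinset (n + m), ‖f w‖ ^ p := by
    rw [← sum_levelFinset_add, mul_sum]
    refine sum_le_sum fun v hv => (T.norm_B_iterate_rpow_le hp m f v).trans ?_
    exact mul_le_mul_of_nonneg_right (hK v hv) (sum_nonneg fun _ _ => by positivity)
  have hγ : (T.gamma (n + m) : ℝ) ≠ 0 := by exact_mod_cast (T.gamma_pos _).ne'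
  unfold Mpp
  calc 1 / (T.gamma n : ℝ) * ∑ v ∈ T.levelFinset n, ‖T.B^[m] f v‖ ^ p
      ≤ 1 / (T.gamma n : ℝ) * ((T.K m n : ℝ) ^ (p - 1) *
          ∑ w ∈ T.levelFinset (n + m), ‖f w‖ ^ p) :=
        mul_le_mul_of_nonneg_left hsum (by positivity)
    _ = _ := by field_simp

end Hardy

def IsLevelRegular (s : ℕ → ℕ) : Prop := ∀ v : T.V, T.numChildren v = s (T.level v + 1)

namespace IsLevelRegular

variable {T} {s : ℕ → ℕ} {p : ℝ}

lemma numNChildren_eq (hreg : T.IsLevelRegular s) (m : ℕ) (v : T.V) :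
    T.numNChildren m v = ∏ k ∈ range m, s (T.level v + k + 1) := by
  induction m with
  | zero => simp [numNChildren, nChildrenFinset_zero]
  | succ m ih =>
    have hchildren : ∀ w ∈ T.nChildrenFinset m v,
        (T.childrenFinset w).card = s (T.level v + m + 1) := fun w hw => by
      rw [← (T.mem_nChildrenFinset.1 hw).1]
      exact hreg w
    rw [numNChildren, nChildrenFinset_succ,
      card_biUnion (t := T.childrenFinset) fun _ _ _ _ h => T.disjoint_nChildrenFinset 1 h,
      sum_congr rfl hchildren, sum_const, smul_eq_mul, prod_range_succ, ← numNChildren, ih]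

lemma gamma_eq (hreg : T.IsLevelRegular s) (n : ℕ) :
    T.gamma n = ∏ k ∈ range n, s (k + 1) := by
  have h := T.levelFinset_add 0 n
  rw [zero_add, levelFinset_zero, singleton_biUnion] at h
  rw [gamma, h, ← numNChildren, hreg.numNChildren_eq, T.level_root]
  simp only [zero_add]

lemma succ_pos (hreg : T.IsLevelRegular s) (n : ℕ) : 0 < s (n + 1) := by
  have h := T.gamma_pos (n + 1)
  rw [hreg.gamma_eq, prod_range_succ] at h
  exact Nat.pos_of_mul_pos_left h

lemma gamma_add (hreg : T.IsLevelRegular s) (n m : ℕ) :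
    (T.gamma (n + m) : ℝ) = T.gamma n * ∏ k ∈ range m, (s (n + k + 1) : ℝ) := by
  rw [hreg.gamma_eq, hreg.gamma_eq, prod_range_add]
  push_cast
  simp only [add_assoc]

lemma K_eq (hreg : T.IsLevelRegular s) (m n : ℕ) :
    (T.K m n : ℝ) = ∏ k ∈ range m, (s (n + k + 1) : ℝ) := by
  have hne : (T.levelFinset n).Nonempty := card_pos.1 (T.gamma_pos n)
  rw [K, sup_congr rfl fun v hv => by rw [hreg.numNChildren_eq, T.mem_levelFinset.1 hv],
    sup_const hne]
  push_cast
  rfl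

lemma Mp_B_iterate_le (hreg : T.IsLevelRegular s) (hp : 1 ≤ p) (m n : ℕ) (f : T.V → ℂ) :
    T.Mp p (T.B^[m] f) n ≤ (∏ k ∈ range m, (s (n + k + 1) : ℝ)) * T.Mp p f (n + m) := by
  set κ := ∏ k ∈ range m, (s (n + k + 1) : ℝ)
  have hκ : 0 < κ := prod_pos fun k _ => by exact_mod_cast hreg.succ_pos (n + k)
  have hγ : (T.gamma n : ℝ) ≠ 0 := by exact_mod_cast (T.gamma_pos n).ne'
  have hMpp : T.Mpp p (T.B^[m] f) n ≤ κ ^ p * T.Mpp p f (n + m) :=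
    calc T.Mpp p (T.B^[m] f) n ≤ κ ^ (p - 1) * κ * T.Mpp p f (n + m) := by
          simpa only [hreg.K_eq, hreg.gamma_add, mul_div_cancel_left₀ _ hγ] using
            T.Mpp_B_iterate_le hp m n f
      _ = κ ^ p * T.Mpp p f (n + m) := by
          rw [Real.rpow_sub_one hκ.ne', div_mul_cancel₀ _ hκ.ne']
  calc T.Mp p (T.B^[m] f) n ≤ (κ ^ p * T.Mpp p f (n + m)) ^ (1 / p) :=
        Real.rpow_le_rpow (T.Mpp_nonneg _ _) hMpp (one_div_nonneg.2 (by linarith))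
    _ = κ * T.Mp p f (n + m) := by
        rw [Real.mul_rpow (by positivity) (T.Mpp_nonneg _ _), one_div,
          Real.rpow_rpow_inv hκ.le (by linarith), Mp, one_div]

lemma Mp_B_iterate_one (hreg : T.IsLevelRegular s) (hp : p ≠ 0) (m n : ℕ) :
    T.Mp p (T.B^[m] 1) n = ∏ k ∈ range m, (s (n + k + 1) : ℝ) :=
  T.Mp_eq_of_norm_eq hp (by positivity) fun v hv => by
    rw [B_iterate_one_apply, hreg.numNChildren_eq, T.mem_levelFinset.1 hv, Complex.norm_natCast,
      Nat.cast_prod]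

lemma isLeast_opNorm_set (hreg : T.IsLevelRegular s) (hp : 1 ≤ p) (hs : BddAbove (Set.range s))
    (m : ℕ) :
    IsLeast {C : ℝ | 0 ≤ C ∧ ∀ f, T.MemHp p f →
        T.MemHp p (T.B^[m] f) ∧ T.Hnorm p (T.B^[m] f) ≤ C * T.Hnorm p f}
      (⨆ n, ∏ k ∈ range m, (s (n + k + 1) : ℝ)) := by
  have hp0 : p ≠ 0 := by linarith
  set W := ⨆ n, ∏ k ∈ range m, (s (n + k + 1) : ℝ)
  have hW : 0 ≤ W := Real.iSup_nonneg fun n => by positivity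
  constructor
  · refine ⟨hW, fun f hf => ?_⟩
    have key : ∀ n, T.Mp p (T.B^[m] f) n ≤ W * T.Hnorm p f := fun n =>
      (hreg.Mp_B_iterate_le hp m n f).trans <| mul_le_mul
        (le_ciSup (bddAbove_range_prod_shift hs m) n) (T.Mp_le_Hnorm hf _) (T.Mp_nonneg _ _) hW
    exact ⟨⟨_, key⟩, ciSup_le key⟩
  · rintro C ⟨-, hC⟩
    have hone : ∀ n, T.Mp p (1 : T.V → ℂ) n = 1 := fun n =>
      T.Mp_eq_of_norm_eq hp0 zero_le_one fun _ _ => norm_one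
    have h := (hC 1 ⟨1, fun n => (hone n).le⟩).2
    rwa [T.Hnorm_eq_iSup (hreg.Mp_B_iterate_one hp0 m), T.Hnorm_eq_iSup hone, ciSup_const,
      mul_one] at h

lemma boundedOn_B_iterate (hreg : T.IsLevelRegular s) (hp : 1 ≤ p) (hs : BddAbove (Set.range s))
    (m : ℕ) : T.BoundedOn (T.B^[m]) (T.MemHp p) p :=
  ⟨_, (hreg.isLeast_opNorm_set hp hs m).1⟩

lemma opNorm_B_iterate (hreg : T.IsLevelRegular s) (hp : 1 ≤ p) (hs : BddAbove (Set.range s))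
    (m : ℕ) :
    T.opNorm (T.B^[m]) (T.MemHp p) p = ⨆ n, ∏ k ∈ range m, (s (n + k + 1) : ℝ) :=
  (hreg.isLeast_opNorm_set hp hs m).csInf_eq

lemma exists_eigenvector (hreg : T.IsLevelRegular s) (hp : p ≠ 0) {z : ℂ}
    (hz : BddAbove (Set.range fun n : ℕ => ‖z‖ ^ n / ∏ k ∈ range n, (s (k + 1) : ℝ))) :
    ∃ f : T.V → ℂ, T.MemHp p f ∧ f ≠ 0 ∧ T.B f = fun v => z * f v := by
  set φ : ℕ → ℂ := fun n => z ^ n / T.gamma n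
  refine ⟨fun v => φ (T.level v), ?_, ?_, ?_⟩
  · obtain ⟨C, hC⟩ := hz
    refine ⟨C, fun n => ?_⟩
    rw [T.Mp_radial hp]
    simpa [φ, hreg.gamma_eq] using hC (Set.mem_range_self n)
  · intro h
    simpa [φ, T.level_root, T.gamma_zero] using congrFun h T.root
  · funext v
    have hs : (s (T.level v + 1) : ℂ) ≠ 0 := by exact_mod_cast (hreg.succ_pos _).ne'
    have hγ : (T.gamma (T.level v) : ℂ) ≠ 0 := by exact_mod_cast (T.gamma_pos _).ne'
    have hγ_succ : (T.gamma (T.level v + 1) : ℂ) = T.gamma (T.level v) * s (T.level v + 1) := by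
      rw [hreg.gamma_eq, hreg.gamma_eq, prod_range_succ]
      push_cast
      rfl
    rw [B_radial_apply, hreg v]
    simp only [φ, hγ_succ]
    field_simp
    ring

end IsLevelRegular

end HTree

theorem backward_shift_level_regular_general (T : HTree) (p : ℝ) (hp : 1 ≤ p)
    (s : ℕ → ℕ) (hbdd : ∃ M : ℕ, ∀ n, s n ≤ M)
    (hreg : ∀ v : T.V, T.numChildren v = s (T.level v + 1)) :
    (T.BoundedOn T.B (T.MemHp p) p ∧
      T.opNorm T.B (T.MemHp p) p = ⨆ n : ℕ, (s (n + 1) : ℝ)) ∧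
    (∀ z : ℂ,
      BddAbove (Set.range fun n : ℕ =>
        ‖z‖ ^ n / ∏ k ∈ Finset.range n, (s (k + 1) : ℝ)) →
      ∃ f : T.V → ℂ, T.MemHp p f ∧ f ≠ 0 ∧ T.B f = fun v => z * f v) ∧
    (∀ m : ℕ, 1 ≤ m →
      T.opNorm ((T.B)^[m]) (T.MemHp p) p =
        ⨆ n : ℕ, ∏ k ∈ Finset.range m, (s (n + k + 1) : ℝ)) ∧
    (∀ t : ℝ,
      Filter.liminf
          (fun n : ℕ => (∏ k ∈ Finset.range n, (s (k + 1) : ℝ)) ^ ((1 : ℝ) / n))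
          Filter.atTop = t →
      (⨆ n : ℕ, (s (n + 1) : ℝ)) = t →
      (Filter.Tendsto
          (fun m : ℕ => (T.opNorm ((T.B)^[m]) (T.MemHp p) p) ^ ((1 : ℝ) / m))
          Filter.atTop (nhds t) ∧
        ∀ z : ℂ, ‖z‖ < t →
          ∃ f : T.V → ℂ, T.MemHp p f ∧ f ≠ 0 ∧ T.B f = fun v => z * f v)) := by
  replace hreg : T.IsLevelRegular s := hreg
  have hp0 : p ≠ 0 := by linarith
  obtain ⟨M, hM⟩ := hbdd
  have hs : BddAbove (Set.range s) := ⟨M, Set.forall_mem_range.2 hM⟩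
  have hop := hreg.opNorm_B_iterate hp hs
  refine ⟨⟨by simpa using hreg.boundedOn_B_iterate hp hs 1, by simpa using hop 1⟩,
    fun z hz => hreg.exists_eigenvector hp0 hz, fun m _ => hop m, fun t hlim hsup => ⟨?_, ?_⟩⟩
  · have hst : ∀ n, (s (n + 1) : ℝ) ≤ t := by
      rw [← hsup]
      exact le_ciSup ⟨M, Set.forall_mem_range.2 fun n => by exact_mod_cast hM _⟩
    simp_rw [hop]
    exact tendsto_rpow_one_div_of_liminf_eq (fun m => by positivity)
      (fun m => by simpa using le_ciSup (bddAbove_range_prod_shift hs m) 0)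
      (fun m => ciSup_le fun n => prod_range_shift_le_pow hst m n) hlim
  · intro z hz
    exact hreg.exists_eigenvector hp0 <| bddAbove_range_pow_div_of_lt_liminf
      (fun n => prod_pos fun k _ => by exact_mod_cast hreg.succ_pos k) (norm_nonneg z)
      (hlim ▸ hz)

/-- for a tree with `γ(1,v) = s_{|v|+1}` for a bounded sequence of positive
integers `(s_n)`: `B` is bounded with `‖B‖ = sup_n s_n`; every `λ` with
`(λ^n/(s_1⋯s_n))_n` bounded is an eigenvalue on `H^p(T)`; `‖B^m‖ = sup_n s_{n+1}⋯s_{n+m}`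
(whence the spectral-radius formula); and if `liminf (s_1⋯s_n)^{1/n} = sup_n s_n = t`,
the spectral radius is `t` and every `|λ| < t` is an eigenvalue. -/
theorem backward_shift_level_regular (T : HTree) (p : ℝ) (hp : 1 ≤ p)
    (s : ℕ → ℕ) (hpos : ∀ n, 0 < s n) (hbdd : ∃ M : ℕ, ∀ n, s n ≤ M)
    (hreg : ∀ v : T.V, T.numChildren v = s (T.level v + 1)) :
    (T.BoundedOn T.B (T.MemHp p) p ∧
      T.opNorm T.B (T.MemHp p) p = ⨆ n : ℕ, (s (n + 1) : ℝ)) ∧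
    (∀ z : ℂ,
      BddAbove (Set.range fun n : ℕ =>
        ‖z‖ ^ n / ∏ k ∈ Finset.range n, (s (k + 1) : ℝ)) →
      ∃ f : T.V → ℂ, T.MemHp p f ∧ f ≠ 0 ∧ T.B f = fun v => z * f v) ∧
    (∀ m : ℕ, 1 ≤ m →
      T.opNorm ((T.B)^[m]) (T.MemHp p) p =
        ⨆ n : ℕ, ∏ k ∈ Finset.range m, (s (n + k + 1) : ℝ)) ∧
    (∀ t : ℝ,
      Filter.liminf
          (fun n : ℕ => (∏ k ∈ Finset.range n, (s (k + 1) : ℝ)) ^ ((1 : ℝ) / n))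
          Filter.atTop = t →
      (⨆ n : ℕ, (s (n + 1) : ℝ)) = t →
      (Filter.Tendsto
          (fun m : ℕ => (T.opNorm ((T.B)^[m]) (T.MemHp p) p) ^ ((1 : ℝ) / m))
          Filter.atTop (nhds t) ∧
        ∀ z : ℂ, ‖z‖ < t →
          ∃ f : T.V → ℂ, T.MemHp p f ∧ f ≠ 0 ∧ T.B f = fun v => z * f v)) :=
  backward_shift_level_regular_general T p hp s hbdd hreg
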